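/- Let S be an m×n sign matrix and let S′ be any matrix obtained from S by permuting its rows. Then signrank(S) ≤ SC(S′) + 1, where SC(S′) is the maximum number of sign changes in any column of S′. -/

import Mathlib

/-- The sign-rank of an `m × n` sign matrix `S`: the minimum rank of a real matrix `M`
with `S i j * M i j > 0` for all `i, j`. -/
noncomputable def signRank {m n : ℕ} (S : Matrix (Fin m) (Fin n) ℝ) : ℕ :=
  sInf {r : ℕ | ∃ M : Matrix (Fin m) (Fin n) ℝ, M.rank = r ∧ ∀ i j, S i j * M i j > 0}

/-- `SC S`: the maximum, over all columns `j`, of the number of sign changes in column `j`,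
i.e. of pairs of consecutive row indices where the entries of column `j` differ. -/
noncomputable def maxColSignChanges {m n : ℕ} (S : Matrix (Fin m) (Fin n) ℝ) : ℕ :=
  Finset.univ.sup fun j : Fin n =>
    Nat.card {p : Fin m × Fin m // (p.2 : ℕ) = (p.1 : ℕ) + 1 ∧ S p.1 j ≠ S p.2 j}

/-!
A column of `S.submatrix σ id` whose sign changes sit between rows `k` and `k + 1` for
`k ∈ c` has, up to a global sign, the sign pattern of `∏ k ∈ c, (x - (k + 1/2))` at
`x = 0, …, m - 1`. Evaluating these polynomials of degree `≤ SC` at `σ⁻¹ i` gives a matrix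
with the signs of `S` that factors through the `m × (SC + 1)` matrix `((σ⁻¹ i) ^ t)`.
-/

open Finset Polynomial

theorem signRank_le_rank {m n : ℕ} {S M : Matrix (Fin m) (Fin n) ℝ}
    (h : ∀ i j, S i j * M i j > 0) : signRank S ≤ M.rank :=
  Nat.sInf_le ⟨M, rfl, h⟩

theorem Matrix.rank_of_polynomial_eval_le {ι κ R : Type*} [Fintype κ] [CommRing R]
    [StrongRankCondition R]
    (x : ι → R) (p : κ → R[X]) {d : ℕ} (hp : ∀ j, (p j).natDegree ≤ d) :
    (Matrix.of fun i j => (p j).eval (x i)).rank ≤ d + 1 := by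
  have hfactor : (Matrix.of fun i j => (p j).eval (x i)) =
      Matrix.of (fun i (t : Fin (d + 1)) => x i ^ (t : ℕ)) *
        Matrix.of fun (t : Fin (d + 1)) j => (p j).coeff t := by
    ext i j
    simp only [Matrix.of_apply, Matrix.mul_apply, eval_eq_sum_range' (Nat.lt_succ_of_le (hp j)),
      ← Fin.sum_univ_eq_sum_range, mul_comm]
  calc _ ≤ (Matrix.of fun i (t : Fin (d + 1)) => x i ^ (t : ℕ)).rank :=
        hfactor ▸ Matrix.rank_mul_le_left _ _
    _ ≤ Fintype.card (Fin (d + 1)) := Matrix.rank_le_card_width _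
    _ = d + 1 := Fintype.card_fin _

theorem Fin.mul_pos_of_forall_mul_succ_pos {R : Type*} [CommRing R] [LinearOrder R]
    [IsStrictOrderedRing R] {m : ℕ} {f : Fin m → R} (hf : ∀ a, f a ≠ 0)
    (h : ∀ a b : Fin m, (b : ℕ) = a + 1 → 0 < f a * f b) (a b : Fin m) : 0 < f a * f b := by
  suffices hchain : ∀ k (a b : Fin m), (b : ℕ) = a + k → 0 < f a * f b by
    rcases le_total a b with hab | hab
    · exact hchain (b - a) a b (by omega)
    · exact mul_comm (f a) (f b) ▸ hchain (a - b) b a (by omega)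
  intro k
  induction k with
  | zero => exact fun a b hab => Fin.ext hab ▸ mul_self_pos.2 (hf b)
  | succ k ih =>
    intro a b hab
    let c : Fin m := ⟨a + k, by omega⟩
    have hac := ih a c rfl
    have hcb := h c b (by simp [c, hab]; omega)
    refine pos_of_mul_pos_right (a := f c * f c) ?_ (mul_self_nonneg _)
    calc 0 < f a * f c * (f c * f b) := mul_pos hac hcb
      _ = _ := by ring

noncomputable def midpointPoly (c : Finset ℕ) : ℝ[X] :=
  ∏ k ∈ c, (X - C ((k : ℝ) + 1 / 2))

theorem natDegree_midpointPoly (c : Finset ℕ) : (midpointPoly c).natDegree = c.card :=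
  natDegree_finsetProd_X_sub_C_eq_card _ _

theorem midpointPoly_eval_mul_eval_succ (c : Finset ℕ) (i : ℕ) :
    (midpointPoly c).eval (i : ℝ) * (midpointPoly c).eval ((i : ℝ) + 1) =
      ∏ k ∈ c, (((i : ℝ) - k) ^ 2 - 1 / 4) := by
  simp only [midpointPoly, eval_prod, eval_sub, eval_X, eval_C, ← prod_mul_distrib]
  exact prod_congr rfl fun k _ => by ring

theorem one_le_sq_natCast_sub {i k : ℕ} (h : k ≠ i) : 1 ≤ ((i : ℝ) - k) ^ 2 := by
  rcases Nat.lt_or_gt_of_ne h with hki | hik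
  · have : (k : ℝ) + 1 ≤ i := by exact_mod_cast hki
    nlinarith
  · have : (i : ℝ) + 1 ≤ k := by exact_mod_cast hik
    nlinarith

theorem midpointPoly_eval_mul_eval_succ_pos {c : Finset ℕ} {i : ℕ} (hi : i ∉ c) :
    0 < (midpointPoly c).eval (i : ℝ) * (midpointPoly c).eval ((i : ℝ) + 1) := by
  rw [midpointPoly_eval_mul_eval_succ]
  refine prod_pos fun k hk => ?_
  have := one_le_sq_natCast_sub (ne_of_mem_of_not_mem hk hi)
  linarith

theorem midpointPoly_eval_mul_eval_succ_neg {c : Finset ℕ} {i : ℕ} (hi : i ∈ c) :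
    (midpointPoly c).eval (i : ℝ) * (midpointPoly c).eval ((i : ℝ) + 1) < 0 := by
  rw [midpointPoly_eval_mul_eval_succ, ← mul_prod_erase c _ hi, sub_self]
  refine mul_neg_of_neg_of_pos (by norm_num) (prod_pos fun k hk => ?_)
  have := one_le_sq_natCast_sub (ne_of_mem_erase hk)
  linarith

theorem midpointPoly_eval_natCast_ne_zero (c : Finset ℕ) (i : ℕ) :
    (midpointPoly c).eval (i : ℝ) ≠ 0 := by
  refine left_ne_zero_of_mul (b := (midpointPoly c).eval ((i : ℝ) + 1)) ?_
  by_cases hi : i ∈ c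
  exacts [(midpointPoly_eval_mul_eval_succ_neg hi).ne, (midpointPoly_eval_mul_eval_succ_pos hi).ne']

def signChangePositions {α : Type*} [DecidableEq α] {m : ℕ} (u : Fin m → α) : Finset ℕ :=
  ({q : Fin m × Fin m | (q.2 : ℕ) = q.1 + 1 ∧ u q.1 ≠ u q.2} : Finset _).image
    fun q => (q.1 : ℕ)

theorem card_signChangePositions_le {α : Type*} [DecidableEq α] {m : ℕ} (u : Fin m → α) :
    (signChangePositions u).card ≤
      Nat.card {q : Fin m × Fin m // (q.2 : ℕ) = q.1 + 1 ∧ u q.1 ≠ u q.2} := by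
  rw [Nat.card_eq_fintype_card, Fintype.card_subtype]
  exact card_image_le

theorem mem_signChangePositions {α : Type*} [DecidableEq α] {m : ℕ} {u : Fin m → α}
    {a b : Fin m} (hab : (b : ℕ) = a + 1) :
    (a : ℕ) ∈ signChangePositions u ↔ u a ≠ u b := by
  refine ⟨?_, fun h => mem_image.2 ⟨(a, b), by simp [hab, h], rfl⟩⟩
  simp only [signChangePositions, mem_image, mem_filter, mem_univ, true_and]
  rintro ⟨q, ⟨hq, hne⟩, hqa⟩
  obtain rfl : q.1 = a := Fin.ext hqa
  obtain rfl : q.2 = b := Fin.ext (by omega)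
  exact hne

theorem exists_poly_natDegree_le_signChanges {m : ℕ} (u : Fin m → ℝ)
    (hu : ∀ i, u i = 1 ∨ u i = -1) :
    ∃ p : ℝ[X],
      p.natDegree ≤ Nat.card {q : Fin m × Fin m // (q.2 : ℕ) = q.1 + 1 ∧ u q.1 ≠ u q.2} ∧
        ∀ i, 0 < u i * p.eval (i : ℝ) := by
  set c := signChangePositions u
  set f : Fin m → ℝ := fun a => u a * (midpointPoly c).eval (a : ℝ)
  have hf : ∀ a, f a ≠ 0 := fun a =>
    mul_ne_zero (by rcases hu a with h | h <;> norm_num [h]) (midpointPoly_eval_natCast_ne_zero c a)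
  have hsucc : ∀ a b : Fin m, (b : ℕ) = a + 1 → 0 < f a * f b := by
    intro a b hab
    have hb : ((b : ℕ) : ℝ) = (a : ℝ) + 1 := by exact_mod_cast hab
    have hfab : f a * f b = u a * u b *
        ((midpointPoly c).eval (a : ℝ) * (midpointPoly c).eval ((a : ℝ) + 1)) := by
      simp only [f, hb]
      ring
    rw [hfab]
    by_cases h : u a = u b
    · refine mul_pos (by rcases hu b with h' | h' <;> norm_num [h, h']) ?_
      exact midpointPoly_eval_mul_eval_succ_pos ((mem_signChangePositions hab).not.2 (not_not.2 h))
    · refine mul_pos_of_neg_of_neg ?_ (midpointPoly_eval_mul_eval_succ_neg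
        ((mem_signChangePositions hab).2 h))
      rcases hu a with h₁ | h₁ <;> rcases hu b with h₂ | h₂ <;> simp_all
  rcases isEmpty_or_nonempty (Fin m) with _ | ⟨⟨a₀⟩⟩
  · exact ⟨0, by simp, isEmptyElim⟩
  refine ⟨C (f a₀) * midpointPoly c, ?_, fun i => ?_⟩
  · calc _ ≤ (midpointPoly c).natDegree := natDegree_C_mul_le _ _
      _ = c.card := natDegree_midpointPoly c
      _ ≤ _ := card_signChangePositions_le u
  · calc 0 < f a₀ * f i := Fin.mul_pos_of_forall_mul_succ_pos hf hsucc a₀ i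
      _ = _ := by simp only [f, eval_mul, eval_C]; ring

theorem card_signChanges_le_maxColSignChanges {m n : ℕ} (S : Matrix (Fin m) (Fin n) ℝ)
    (j : Fin n) :
    Nat.card {q : Fin m × Fin m // (q.2 : ℕ) = q.1 + 1 ∧ S q.1 j ≠ S q.2 j} ≤
      maxColSignChanges S :=
  le_sup (f := fun j =>
    Nat.card {q : Fin m × Fin m // (q.2 : ℕ) = q.1 + 1 ∧ S q.1 j ≠ S q.2 j}) (mem_univ j)

/-- If `S'` is obtained from the sign matrix `S` by permuting its rows, then
`signrank S ≤ SC(S') + 1`. -/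
theorem signRank_le_signChanges_perm_add_one {m n : ℕ}
    (S : Matrix (Fin m) (Fin n) ℝ) (hS : ∀ i j, S i j = 1 ∨ S i j = -1)
    (σ : Equiv.Perm (Fin m)) :
    signRank S ≤ maxColSignChanges (S.submatrix σ id) + 1 := by
  set S' := S.submatrix σ id
  have hcol : ∀ j, ∃ p : ℝ[X], p.natDegree ≤ maxColSignChanges S' ∧
      ∀ i, 0 < S' i j * p.eval (i : ℝ) := fun j =>
    have ⟨p, hdeg, hsign⟩ :=
      exists_poly_natDegree_le_signChanges (fun i => S' i j) (fun i => hS _ _)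
    ⟨p, hdeg.trans (card_signChanges_le_maxColSignChanges S' j), hsign⟩
  choose p hdeg hsign using hcol
  calc signRank S ≤ (Matrix.of fun i j => (p j).eval (((σ.symm i : Fin m) : ℕ) : ℝ)).rank :=
        signRank_le_rank fun i j => by simpa [S'] using hsign j (σ.symm i)
    _ ≤ _ := Matrix.rank_of_polynomial_eval_le _ p hdeg
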